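/- Let S = (b + ℤⁿ) ∩ Q be a polyhedrally-truncated affine lattice, B = {r : aⁱ·r ≤ 1, i ∈ I} a maximal S-free convex 0-neighborhood with ψ(r) = max_{i∈I} aⁱ·r, and p* ∈ ℝⁿ. Define φ(p) := inf{ψ(w) + N·V_ψ(p*) : w ∈ ℝⁿ, N ∈ ℕ, w + Np* ∈ p + W_S}. Then ψ*_{B(V_ψ(p*),p*)}((p, 0)) ≤ φ(p) for all p ∈ ℝⁿ. -/
import Mathlib


open scoped BigOperators
open Pointwise

noncomputable section

/-- `(ψ, π)` is a valid (partial) cut-generating pair for `S, R, P`. -/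
def ValidPair {E : Type*} [AddCommGroup E] [Module ℝ E]
    (S R P : Set E) (psi pi : E → ℝ) : Prop :=
  ∀ (k l : ℕ) (r : Fin k → E) (p : Fin l → E),
    (∀ i, r i ∈ R) → (∀ j, p j ∈ P) →
    ∀ (s : Fin k → ℝ) (y : Fin l → ℕ),
      (∀ i, 0 ≤ s i) →
      (∑ i, s i • r i) + (∑ j, (y j : ℝ) • p j) ∈ S →
      1 ≤ (∑ i, psi (r i) * s i) + (∑ j, pi (p j) * (y j : ℝ))

/-- `W_S⁺`. -/
def Wplus {E : Type*} [AddCommGroup E] [Module ℝ E] (S : Set E) : Set E :=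
  {w | ∀ s ∈ S, ∀ lam : ℕ, s + (lam : ℝ) • w ∈ S}

/-- `W_S` (integer translations). -/
def Wint {E : Type*} [AddCommGroup E] [Module ℝ E] (S : Set E) : Set E :=
  {w | ∀ s ∈ S, ∀ lam : ℤ, s + (lam : ℝ) • w ∈ S}

/-- `π` is a lifting of `ψ` (full-space setting). -/
def IsLifting {E : Type*} [AddCommGroup E] [Module ℝ E] (S : Set E) (psi pi : E → ℝ) : Prop :=
  ValidPair S Set.univ Set.univ psi pi

/-- `π` is a minimal lifting of `ψ` (full-space setting). -/
def IsMinimalLifting {E : Type*} [AddCommGroup E] [Module ℝ E] (S : Set E)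
    (psi pi : E → ℝ) : Prop :=
  IsLifting S psi pi ∧ ∀ pi' : E → ℝ, IsLifting S psi pi' → pi' ≤ pi → pi' = pi

/-- `V_ψ(p) = inf {π(p) : π minimal lifting of ψ}`. -/
def Vpsi {E : Type*} [AddCommGroup E] [Module ℝ E] (S : Set E) (psi : E → ℝ) (p : E) : ℝ :=
  sInf {v : ℝ | ∃ pi : E → ℝ, IsMinimalLifting S psi pi ∧ pi p = v}

/-- `𝓛_{ψ,p*}`. -/
def LiftSet {E : Type*} [AddCommGroup E] [Module ℝ E] (S : Set E) (psi : E → ℝ) (p : E) :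
    Set (E → ℝ) :=
  {pi | IsMinimalLifting S psi pi ∧ pi p = Vpsi S psi p}

/-- The fixing region `𝓕_{ψ,p*}`. -/
def FixingRegion {E : Type*} [AddCommGroup E] [Module ℝ E] (S : Set E) (psi : E → ℝ)
    (p : E) : Set E :=
  {q | ∀ pi1 ∈ LiftSet S psi p, ∀ pi2 ∈ LiftSet S psi p, pi1 q = pi2 q}

/-- Dot product on `ℝⁿ`. -/
def dotp {n : ℕ} (a b : Fin n → ℝ) : ℝ := ∑ i, a i * b i

/-- The integer points `ℤⁿ ⊆ ℝⁿ`. -/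
def Zpts (n : ℕ) : Set (Fin n → ℝ) := {x | ∀ i, ∃ z : ℤ, x i = (z : ℝ)}

/-- `Q` is a rational polyhedron. -/
def IsRatPolyhedron {n : ℕ} (Q : Set (Fin n → ℝ)) : Prop :=
  ∃ (m : ℕ) (A : Fin m → Fin n → ℚ) (c : Fin m → ℚ),
    Q = {x | ∀ i, (∑ j, (A i j : ℝ) * x j) ≤ (c i : ℝ)}

/-- `B` is a maximal `T`-free convex `0`-neighborhood. -/
def IsMaxFreeNbhd {F : Type*} [AddCommGroup F] [Module ℝ F] [TopologicalSpace F]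
    (T B : Set F) : Prop :=
  Convex ℝ B ∧ (0 : F) ∈ interior B ∧ interior B ∩ T = ∅ ∧
    ∀ B' : Set F, Convex ℝ B' → (0 : F) ∈ interior B' → interior B' ∩ T = ∅ → B ⊆ B' → B' = B

/-- `ψ(r) = max_i aⁱ·r`. -/
def psiMax {n : ℕ} {ι : Type} [Fintype ι] [Nonempty ι] (a : ι → Fin n → ℝ)
    (r : Fin n → ℝ) : ℝ :=
  ⨆ i, dotp (a i) r

/-- The translated cone `B(λ, p*) ⊆ ℝⁿ × ℝ`. -/
def Bcone {n : ℕ} {ι : Type} [Fintype ι] (a : ι → Fin n → ℝ) (lam : ℝ) (p : Fin n → ℝ) :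
    Set ((Fin n → ℝ) × ℝ) :=
  {x | ∀ i, dotp (a i) x.1 + (lam - dotp (a i) p) * x.2 ≤ 1}

/-- `ℤ₊` as a subset of `ℝ`. -/
def Znn : Set ℝ := {t | ∃ k : ℕ, t = (k : ℝ)}

/-- `ψ_{B(λ,p*)}` on `ℝⁿ × ℝ`. -/
def psiB {n : ℕ} {ι : Type} [Fintype ι] [Nonempty ι] (a : ι → Fin n → ℝ) (lam : ℝ)
    (p : Fin n → ℝ) (x : (Fin n → ℝ) × ℝ) : ℝ :=
  ⨆ i, (dotp (a i) x.1 + (lam - dotp (a i) p) * x.2)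

/-- `ψ*_{B(λ,p*)}(x) = inf {ψ_{B(λ,p*)}(x + u) : u ∈ W⁺_{S×ℤ₊}}`, as an extended real. -/
def psiStarB {n : ℕ} {ι : Type} [Fintype ι] [Nonempty ι] (S : Set (Fin n → ℝ))
    (a : ι → Fin n → ℝ) (lam : ℝ) (p : Fin n → ℝ) (x : (Fin n → ℝ) × ℝ) : EReal :=
  sInf {v : EReal | ∃ u ∈ Wplus (S ×ˢ Znn), v = ((psiB a lam p (x + u) : ℝ) : EReal)}

/-- The Dey–Wolsey lifting `φ(p) = inf {ψ(w) + N V_ψ(p*) : w + N p* ∈ p + W_S}`,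
as an extended real. -/
def phiE {n : ℕ} {ι : Type} [Fintype ι] [Nonempty ι] (S : Set (Fin n → ℝ))
    (a : ι → Fin n → ℝ) (pstar p : Fin n → ℝ) : EReal :=
  sInf {v : EReal | ∃ (w : Fin n → ℝ) (N : ℕ), 1 ≤ N ∧
    w + (N : ℝ) • pstar - p ∈ Wint S ∧
    v = ((psiMax a w + (N : ℝ) * Vpsi S (psiMax a) pstar : ℝ) : EReal)}


lemma dotp_add' {n : ℕ} (a x y : Fin n → ℝ) : dotp a (x + y) = dotp a x + dotp a y := by
  simp [dotp, mul_add, Finset.sum_add_distrib]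

lemma dotp_smul' {n : ℕ} (a : Fin n → ℝ) (c : ℝ) (x : Fin n → ℝ) :
    dotp a (c • x) = c * dotp a x := by
  simp [dotp, Finset.mul_sum, mul_left_comm]

/-- Proposition 4.4: the geometric lifting dominates the algebraic one:
`ψ*_{B(V_ψ(p*),p*)}((p,0)) ≤ φ(p)` for all `p`. -/
theorem stmt7 {n : ℕ} (hn : 1 ≤ n) (b : Fin n → ℝ) (hb : b ∉ Zpts n)
    (Q : Set (Fin n → ℝ)) (hQ : IsRatPolyhedron Q) (S : Set (Fin n → ℝ))
    (hS : S = {x | x - b ∈ Zpts n} ∩ Q)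
    {ι : Type} [Fintype ι] [Nonempty ι] (a : ι → Fin n → ℝ) (B : Set (Fin n → ℝ))
    (hB : B = {r | ∀ i, dotp (a i) r ≤ 1}) (hmax : IsMaxFreeNbhd S B)
    (pstar : Fin n → ℝ) :
    ∀ p : Fin n → ℝ,
      psiStarB S a (Vpsi S (psiMax a) pstar) pstar ((p, (0 : ℝ))) ≤ phiE S a pstar p := by
  intro p
  refine le_sInf ?_
  rintro v ⟨w, N, hN, hW, rfl⟩
  set lam := Vpsi S (psiMax a) pstar with hlam
  apply sInf_le
  refine ⟨(w + (N : ℝ) • pstar - p, (N : ℝ)), ?_, ?_⟩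
  · rintro ⟨s, t⟩ ⟨hs, ht⟩ k
    constructor
    · have := hW s hs (k : ℤ)
      simpa using this
    · obtain ⟨m, rfl⟩ := ht
      refine ⟨m + k * N, ?_⟩
      show (m : ℝ) + (k : ℝ) • (N : ℝ) = _
      rw [smul_eq_mul]; push_cast; ring
  · have h0 : ((p, (0:ℝ)) + (w + (N : ℝ) • pstar - p, (N : ℝ)))
        = (w + (N : ℝ) • pstar, (N : ℝ)) := by
      simp [Prod.ext_iff]
    rw [h0]
    have key : psiB a lam pstar (w + (N : ℝ) • pstar, (N : ℝ))
        = psiMax a w + (N : ℝ) * lam := by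
      unfold psiB psiMax
      have h1 : ∀ i, dotp (a i) (w + (N : ℝ) • pstar)
          + (lam - dotp (a i) pstar) * (N : ℝ)
          = dotp (a i) w + (N : ℝ) * lam := by
        intro i; rw [dotp_add', dotp_smul']; ring
      simp only [h1]
      rw [← ciSup_add]
      exact (Set.finite_range fun i => dotp (a i) w).bddAbove
    rw [key]
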